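/- arXiv:1912.06951 — 10 statements merged into one kernel-verified Lean document; each statement's English description precedes it below -/
import Mathlib

section
/- Let K be a field of characteristic zero, let n ≥ 1 be an integer, let λ ∈ K be nonzero, and let X₀, X₁, …, X_n ∈ K all be nonzero and satisfy the Dwork pencil equation X₀^{n+1} + X₁^{n+1} + ⋯ + X_n^{n+1} + (n+1)·λ·X₀X₁⋯X_n = 0. Define μ = (−1)^{n+1}/λ^{n+1} and, for i = 1, …, n, define x_i = X_i^n / ((n+1)·λ·∏_{0 ≤ j ≤ n, j ≠ i} X_j). Then x₁⋯x_n·(x₁ + ⋯ + x_n + 1) + (−1)^{n+1}·μ/(n+1)^{n+1} = 0. -/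
/-!
With `c = (n+1)λ` and `P = X₀⋯Xₙ`, each coordinate is `xᵢ = Xᵢ^{n+1}/(cP)`. The Dwork equation
turns `x₁ + ⋯ + xₙ + 1` into `-X₀^{n+1}/(cP)`, so the product `x₁⋯xₙ(x₁ + ⋯ + xₙ + 1)` is
`-(X₀X₁⋯Xₙ)^{n+1}/(cP)^{n+1} = -1/c^{n+1}`, while `(-1)^{n+1}μ/(n+1)^{n+1} = 1/c^{n+1}`.
-/

open Finset

section MirrorCoordinates

variable {K : Type*} [Field K]

theorem pow_div_mul_prod_erase {ι : Type*} [Fintype ι] [DecidableEq ι] (X : ι → K) {i : ι}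
    (hi : X i ≠ 0) (c : K) (m : ℕ) :
    X i ^ m / (c * ∏ j ∈ univ.erase i, X j) = X i ^ (m + 1) / (c * ∏ j, X j) := by
  rw [← mul_prod_erase univ X (mem_univ i), pow_succ', mul_left_comm, mul_div_mul_left _ _ hi]

section DworkPencil

variable {n m : ℕ} (X : Fin (n + 1) → K) {c : K}

theorem sum_succ_pow_div_add_one_of_dwork (hd : c * ∏ j, X j ≠ 0)
    (h : ∑ i, X i ^ m + c * ∏ i, X i = 0) :
    ∑ i : Fin n, X i.succ ^ m / (c * ∏ j, X j) + 1 = -X 0 ^ m / (c * ∏ j, X j) := by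
  rw [← sum_div, div_add_one hd]
  rw [Fin.sum_univ_succ] at h
  congr 1
  linear_combination h

theorem prod_succ_pow_div (d : K) :
    ∏ i : Fin n, X i.succ ^ m / d = (∏ i : Fin n, X i.succ) ^ m / d ^ n := by
  rw [prod_div_distrib, prod_pow, prod_const, card_univ, Fintype.card_fin]

theorem prod_mul_sum_add_one_of_dwork (hX : ∀ i, X i ≠ 0) (hc : c ≠ 0)
    (h : ∑ i, X i ^ (n + 1) + c * ∏ i, X i = 0) :
    (∏ i : Fin n, X i.succ ^ (n + 1) / (c * ∏ j, X j)) *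
        (∑ i : Fin n, X i.succ ^ (n + 1) / (c * ∏ j, X j) + 1) = -(c ^ (n + 1))⁻¹ := by
  have hP : ∏ j, X j ≠ 0 := prod_ne_zero_iff.mpr fun i _ => hX i
  rw [sum_succ_pow_div_add_one_of_dwork X (mul_ne_zero hc hP) h, prod_succ_pow_div,
    div_mul_div_comm, ← pow_succ, mul_neg, ← mul_pow, mul_comm, ← Fin.prod_univ_succ X, mul_pow,
    neg_div, mul_comm (c ^ _), ← div_div, div_self (pow_ne_zero _ hP), one_div]

end DworkPencil

theorem neg_one_pow_mul_div_pow (n : ℕ) (a b : K) :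
    (-1 : K) ^ n * ((-1 : K) ^ n / b ^ n) / a ^ n = ((a * b) ^ n)⁻¹ := by
  rw [← mul_div_assoc, ← mul_pow, neg_one_mul, neg_neg, one_pow, div_div, mul_pow, mul_comm,
    one_div]

end MirrorCoordinates

theorem dwork_pencil_mirror_equation_general (K : Type*) [Field K] [CharZero K]
    (n : ℕ) (lam : K) (hlam : lam ≠ 0)
    (X : Fin (n + 1) → K) (hX : ∀ i, X i ≠ 0)
    (hDwork : ∑ i, X i ^ (n + 1) + (n + 1 : K) * lam * ∏ i, X i = 0)
    (μ : K) (hμ : μ = (-1 : K) ^ (n + 1) / lam ^ (n + 1))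
    (x : Fin n → K)
    (hx : ∀ i : Fin n, x i = X i.succ ^ n /
      ((n + 1 : K) * lam * ∏ j ∈ Finset.univ.erase i.succ, X j)) :
    (∏ i, x i) * ((∑ i, x i) + 1) + (-1 : K) ^ (n + 1) * μ / (n + 1 : K) ^ (n + 1) = 0 := by
  have hc : (n + 1 : K) * lam ≠ 0 := mul_ne_zero (Nat.cast_add_one_ne_zero n) hlam
  obtain rfl : x = fun i => X i.succ ^ (n + 1) / ((n + 1 : K) * lam * ∏ j, X j) :=
    funext fun i => (hx i).trans (pow_div_mul_prod_erase X (hX _) _ n)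
  rw [prod_mul_sum_add_one_of_dwork X hX hc hDwork, hμ, neg_one_pow_mul_div_pow,
    neg_add_cancel]

/-- Orbifold-invariant coordinates on the Dwork pencil satisfy the
mirror family equation. -/
theorem dwork_pencil_mirror_equation (K : Type*) [Field K] [CharZero K]
    (n : ℕ) (hn : 1 ≤ n) (lam : K) (hlam : lam ≠ 0)
    (X : Fin (n + 1) → K) (hX : ∀ i, X i ≠ 0)
    (hDwork : ∑ i, X i ^ (n + 1) + (n + 1 : K) * lam * ∏ i, X i = 0)
    (μ : K) (hμ : μ = (-1 : K) ^ (n + 1) / lam ^ (n + 1))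
    (x : Fin n → K)
    (hx : ∀ i : Fin n, x i = X i.succ ^ n /
      ((n + 1 : K) * lam * ∏ j ∈ Finset.univ.erase i.succ, X j)) :
    (∏ i, x i) * ((∑ i, x i) + 1) + (-1 : K) ^ (n + 1) * μ / (n + 1 : K) ^ (n + 1) = 0 :=
  dwork_pencil_mirror_equation_general K n lam hlam X hX hDwork μ hμ x hx
end

section
/- Let λ, u, X, Y ∈ ℂ with λ ≠ 0 and u ≠ 0, and assume 16u³λ² − 3iYλ² + 12Xuλ² + 4u⁴ + 4u² ≠ 0 and 4u²λ² + 3Xλ² + u³ − 2u ≠ 0, where i is the imaginary unit. Define x₁ = −(4u²λ² + 3Xλ² + u³ + u)(4u²λ² + 3Xλ² + u³ − 2u) / (6λ²u(16u³λ² − 3iYλ² + 12Xuλ² + 4u⁴ + 4u²)), x₂ = −(16u³λ² − 3iYλ² + 12Xuλ² + 4u⁴ + 4u²) / (8u(4u²λ² + 3Xλ² + u³ − 2u)), and x₃ = u²(4u²λ² + 3Xλ² + u³ − 2u) / (2λ²(16u³λ² − 3iYλ² + 12Xuλ² + 4u⁴ + 4u²)). If Y² = 4X³ − g₂(u)X −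 g₃(u), where g₂(u) = (4/(3λ⁴))·u²·(u⁴ + 8λ²u³ + (4λ²−1)(4λ²+1)u² + 8λ²u + 1) and g₃(u) = (4/(27λ⁶))·u³·(u² + 4λ²u + 1)·(2u⁴ + 16λ²u³ + (32λ⁴−5)u² + 16λ²u + 2), then x₁x₂x₃(x₁ + x₂ + x₃ + 1) + 1/(256λ⁴) = 0. -/
/-!
Put `P = 4u²λ² + 3Xλ² + u³ + u`, `Q = P - 3u` and `D = 4uP - 3iλ²Y`, so that
`x₁ = -PQ/(6λ²uD)`, `x₂ = -D/(8uQ)`, `x₃ = u²Q/(2λ²D)`. Then the left side of the quartic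
equation is `Q K / (2304 λ⁶ u D²)` with `K = -4P²Q + 12u³PQ + 24λ²uDP - 3λ²D²`.
Substituting `D`, the terms of `K` linear in `Y` cancel and `K = 27λ⁶Y² - 4P(PQ - 3u³Q - 12λ²u²P)`.
The Weierstrass cubic has the root `P = 0` (a 2-torsion point) and
`27λ⁶(4X³ - g₂X - g₃) = 4P(PQ - 3u³Q - 12λ²u²P)`, so `K = 0` on the curve.
-/

namespace MirrorQuartic

variable {F : Type*} [Field F] [CharZero F]

def g₂ (lam u : F) : F :=
  4 / (3 * lam ^ 4) * u ^ 2 * (u ^ 4 + 8 * lam ^ 2 * u ^ 3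
    + (4 * lam ^ 2 - 1) * (4 * lam ^ 2 + 1) * u ^ 2 + 8 * lam ^ 2 * u + 1)

def g₃ (lam u : F) : F :=
  4 / (27 * lam ^ 6) * u ^ 3 * (u ^ 2 + 4 * lam ^ 2 * u + 1)
    * (2 * u ^ 4 + 16 * lam ^ 2 * u ^ 3 + (32 * lam ^ 4 - 5) * u ^ 2 + 16 * lam ^ 2 * u + 2)

theorem weierstrass_cubic_factor {lam u X P Q : F} (hlam : lam ≠ 0)
    (hP : P = 4 * u ^ 2 * lam ^ 2 + 3 * X * lam ^ 2 + u ^ 3 + u)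
    (hQ : Q = 4 * u ^ 2 * lam ^ 2 + 3 * X * lam ^ 2 + u ^ 3 - 2 * u) :
    27 * lam ^ 6 * (4 * X ^ 3 - g₂ lam u * X - g₃ lam u)
      = 4 * P * (P * Q - 3 * u ^ 3 * Q - 12 * lam ^ 2 * u ^ 2 * P) := by
  subst hP hQ
  unfold g₂ g₃
  field_simp
  ring

theorem relation_of_weierstrass {R : Type*} [CommRing R] {lam u P Q Y D i : R}
    (hi : i ^ 2 = -1) (hD : D = 4 * u * P - 3 * i * lam ^ 2 * Y)
    (hY : 27 * lam ^ 6 * Y ^ 2 = 4 * P * (P * Q - 3 * u ^ 3 * Q - 12 * lam ^ 2 * u ^ 2 * P)) :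
    -4 * P ^ 2 * Q + 12 * u ^ 3 * P * Q + 24 * lam ^ 2 * u * D * P - 3 * lam ^ 2 * D ^ 2 = 0 := by
  subst hD
  linear_combination hY - 27 * lam ^ 6 * Y ^ 2 * hi

theorem quartic_eq_zero_of_relation {lam u P Q D x₁ x₂ x₃ : F}
    (hlam : lam ≠ 0) (hu : u ≠ 0) (hD : D ≠ 0) (hQ : Q ≠ 0) (hPQ : P = Q + 3 * u)
    (hx₁ : x₁ = -(P * Q) / (6 * lam ^ 2 * u * D))
    (hx₂ : x₂ = -D / (8 * u * Q))
    (hx₃ : x₃ = u ^ 2 * Q / (2 * lam ^ 2 * D))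
    (hK : -4 * P ^ 2 * Q + 12 * u ^ 3 * P * Q + 24 * lam ^ 2 * u * D * P - 3 * lam ^ 2 * D ^ 2 = 0) :
    x₁ * x₂ * x₃ * (x₁ + x₂ + x₃ + 1) + 1 / (256 * lam ^ 4) = 0 := by
  have hlhs : x₁ * x₂ * x₃ * (x₁ + x₂ + x₃ + 1) + 1 / (256 * lam ^ 4)
      = Q * (-4 * P ^ 2 * Q + 12 * u ^ 3 * P * Q + 24 * lam ^ 2 * u * D * P - 3 * lam ^ 2 * D ^ 2)
        / (2304 * lam ^ 6 * u * D ^ 2) := by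
    subst hx₁ hx₂ hx₃ hPQ
    field_simp
    ring
  rw [hlhs, hK, mul_zero, zero_div]

end MirrorQuartic

open MirrorQuartic in
/-- The Narumiya–Shiga substitution transforms the Weierstrass equation
of the mirror-quartic family into the mirror-quartic equation. -/
theorem mirror_quartic_weierstrass_substitution (lam u X Y : ℂ)
    (hlam : lam ≠ 0) (hu : u ≠ 0)
    (hD1 : 16 * u ^ 3 * lam ^ 2 - 3 * Complex.I * Y * lam ^ 2 + 12 * X * u * lam ^ 2
      + 4 * u ^ 4 + 4 * u ^ 2 ≠ 0)
    (hD2 : 4 * u ^ 2 * lam ^ 2 + 3 * X * lam ^ 2 + u ^ 3 - 2 * u ≠ 0)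
    (x₁ x₂ x₃ : ℂ)
    (hx₁ : x₁ = -((4 * u ^ 2 * lam ^ 2 + 3 * X * lam ^ 2 + u ^ 3 + u)
        * (4 * u ^ 2 * lam ^ 2 + 3 * X * lam ^ 2 + u ^ 3 - 2 * u)) /
      (6 * lam ^ 2 * u * (16 * u ^ 3 * lam ^ 2 - 3 * Complex.I * Y * lam ^ 2
        + 12 * X * u * lam ^ 2 + 4 * u ^ 4 + 4 * u ^ 2)))
    (hx₂ : x₂ = -(16 * u ^ 3 * lam ^ 2 - 3 * Complex.I * Y * lam ^ 2
        + 12 * X * u * lam ^ 2 + 4 * u ^ 4 + 4 * u ^ 2) /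
      (8 * u * (4 * u ^ 2 * lam ^ 2 + 3 * X * lam ^ 2 + u ^ 3 - 2 * u)))
    (hx₃ : x₃ = u ^ 2 * (4 * u ^ 2 * lam ^ 2 + 3 * X * lam ^ 2 + u ^ 3 - 2 * u) /
      (2 * lam ^ 2 * (16 * u ^ 3 * lam ^ 2 - 3 * Complex.I * Y * lam ^ 2
        + 12 * X * u * lam ^ 2 + 4 * u ^ 4 + 4 * u ^ 2)))
    (hW : Y ^ 2 = 4 * X ^ 3
      - (4 / (3 * lam ^ 4) * u ^ 2 * (u ^ 4 + 8 * lam ^ 2 * u ^ 3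
          + (4 * lam ^ 2 - 1) * (4 * lam ^ 2 + 1) * u ^ 2 + 8 * lam ^ 2 * u + 1)) * X
      - (4 / (27 * lam ^ 6) * u ^ 3 * (u ^ 2 + 4 * lam ^ 2 * u + 1)
          * (2 * u ^ 4 + 16 * lam ^ 2 * u ^ 3 + (32 * lam ^ 4 - 5) * u ^ 2
            + 16 * lam ^ 2 * u + 2))) :
    x₁ * x₂ * x₃ * (x₁ + x₂ + x₃ + 1) + 1 / (256 * lam ^ 4) = 0 := by
  exact quartic_eq_zero_of_relation hlam hu hD1 hD2 (by ring) hx₁ hx₂ hx₃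
    (relation_of_weierstrass (Y := Y) Complex.I_sq (by ring)
      (by rw [hW]; exact weierstrass_cubic_factor hlam rfl rfl))
end

section
/- Let K be a field, let λ₁, λ₂ ∈ K, and let u, X, Y ∈ K with u ≠ 0. Suppose Y² = X³ + u²((λ₁−1)(λ₂−1)(u + u⁻¹) − 2(λ₁+1)(λ₂+1))X² + 16λ₁λ₂u⁴X. Define v = u + u⁻¹, x = (u²−1)²X/u⁴, y = (u²−1)³Y/u⁶. Then y² = x³ + (v²−4)((λ₁−1)(λ₂−1)v − 2(λ₁+1)(λ₂+1))x² + 16λ₁λ₂(v²−4)²x. -/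
/-!
With `s = (u² - 1)/u²` the map is `(X, Y) ↦ (s²X, s³Y)`, which carries `Y² = X³ + a₂X² + a₄X`
to the model with coefficients `s²a₂`, `s⁴a₄`. Since `s²u² = (u - u⁻¹)² = (u + u⁻¹)² - 4`,
these are exactly the coefficients of the target equation in `v = u + u⁻¹`.
-/

theorem weierstrass_scale {R : Type*} [CommRing R] {a₂ a₄ X Y : R} (s : R)
    (h : Y ^ 2 = X ^ 3 + a₂ * X ^ 2 + a₄ * X) :
    (s ^ 3 * Y) ^ 2 = (s ^ 2 * X) ^ 3 + s ^ 2 * a₂ * (s ^ 2 * X) ^ 2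
      + s ^ 4 * a₄ * (s ^ 2 * X) := by
  linear_combination s ^ 6 * h

theorem add_inv_sq_sub_four {K : Type*} [Field K] {u : K} (hu : u ≠ 0) :
    (u + u⁻¹) ^ 2 - 4 = ((u ^ 2 - 1) / u ^ 2) ^ 2 * u ^ 2 := by
  field_simp
  ring

/-- The quotient map φ : (u,X,Y) ↦ (u + u⁻¹, (u²−1)²X/u⁴, (u²−1)³Y/u⁶)
sends solutions of the equation defining 𝒴_{λ₁,λ₂} to solutions of the 𝒥₇ fibration
on Kum(ℰ₁ × ℰ₂). -/
theorem kummer_quotient_phi (K : Type*) [Field K] (l₁ l₂ u X Y : K) (hu : u ≠ 0)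
    (h : Y ^ 2 = X ^ 3 + u ^ 2 * ((l₁ - 1) * (l₂ - 1) * (u + u⁻¹)
        - 2 * (l₁ + 1) * (l₂ + 1)) * X ^ 2 + 16 * l₁ * l₂ * u ^ 4 * X)
    (v x y : K) (hv : v = u + u⁻¹)
    (hx : x = (u ^ 2 - 1) ^ 2 * X / u ^ 4) (hy : y = (u ^ 2 - 1) ^ 3 * Y / u ^ 6) :
    y ^ 2 = x ^ 3 + (v ^ 2 - 4) * ((l₁ - 1) * (l₂ - 1) * v
      - 2 * (l₁ + 1) * (l₂ + 1)) * x ^ 2 + 16 * l₁ * l₂ * (v ^ 2 - 4) ^ 2 * x := by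
  subst hv
  have hx' : x = ((u ^ 2 - 1) / u ^ 2) ^ 2 * X := by rw [hx]; ring
  have hy' : y = ((u ^ 2 - 1) / u ^ 2) ^ 3 * Y := by rw [hy]; ring
  rw [hx', hy', add_inv_sq_sub_four hu]
  linear_combination weierstrass_scale ((u ^ 2 - 1) / u ^ 2) h
end

section
/- Let F be a field of characteristic different from 2, let p₁, p₂ ∈ F, and let x, y ∈ F with x ≠ 0 and y² = x³ − (p₂/2)x² + (1/4)((p₂²/4) − p₁)x. Define X = y²/x² and Y = y(16x² − p₂² + 4p₁)/(16x²). Then Y² = X³ + p₂X² + p₁X. -/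
/-!
In Silverman's normal form, the point `(x, y)` of `y² = x³ + a x² + b x` with `x ≠ 0` has
`X := y² / x² = x + a + b / x`, so `(X - a)² - 4 b = (x - b / x)²` and hence
`X ((X - a)² - 4 b) = (y (x² - b) / x²)²`. The curve of the theorem is this normal form with
`a = -p₂ / 2` and `b = (p₂² / 4 - p₁) / 4`, for which `-2 a = p₂` and `a² - 4 b = p₁`.
-/

section TwoIsogeny

variable {F : Type*} [Field F] {a b x y : F}

theorem div_sq_eq_of_sq_eq_cubic (hx : x ≠ 0) (h : y ^ 2 = x ^ 3 + a * x ^ 2 + b * x) :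
    y ^ 2 / x ^ 2 = x + a + b / x := by
  rw [h]
  field_simp

theorem twoIsogeny_equation (hx : x ≠ 0) (h : y ^ 2 = x ^ 3 + a * x ^ 2 + b * x) :
    (y * (x ^ 2 - b) / x ^ 2) ^ 2 =
      (y ^ 2 / x ^ 2) ^ 3 + (-2 * a) * (y ^ 2 / x ^ 2) ^ 2 + (a ^ 2 - 4 * b) * (y ^ 2 / x ^ 2) := by
  have hX : y ^ 2 / x ^ 2 - a = x + b / x := by
    rw [div_sq_eq_of_sq_eq_cubic hx h]
    ring
  calc (y * (x ^ 2 - b) / x ^ 2) ^ 2 = y ^ 2 / x ^ 2 * (x - b / x) ^ 2 := by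
        field_simp
    _ = y ^ 2 / x ^ 2 * ((y ^ 2 / x ^ 2 - a) ^ 2 - 4 * b) := by
        rw [hX]
        field_simp
        ring
    _ = _ := by ring

end TwoIsogeny

/-- The dual two-isogeny φ′ : (x,y) ↦ (y²/x², y(16x² − p₂² + 4p₁)/(16x²))
sends points of the quotient curve back to points of Y² = X³ + p₂X² + p₁X. -/
theorem van_geemen_sarti_dual_isogeny (F : Type*) [Field F] (h2 : (2 : F) ≠ 0)
    (p₁ p₂ x y : F) (hx : x ≠ 0)
    (h : y ^ 2 = x ^ 3 - (p₂ / 2) * x ^ 2 + (1 / 4) * ((p₂ ^ 2 / 4) - p₁) * x)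
    (X Y : F) (hX : X = y ^ 2 / x ^ 2)
    (hY : Y = y * (16 * x ^ 2 - p₂ ^ 2 + 4 * p₁) / (16 * x ^ 2)) :
    Y ^ 2 = X ^ 3 + p₂ * X ^ 2 + p₁ * X := by
  have hcurve := twoIsogeny_equation (a := -(p₂ / 2)) (b := (1 / 4) * (p₂ ^ 2 / 4 - p₁)) hx
    (by rw [h]; ring)
  have h4 : (4 : F) ≠ 0 := by
    rw [show (4 : F) = 2 ^ 2 by norm_num]
    exact pow_ne_zero 2 h2
  have h16 : (16 : F) ≠ 0 := by
    rw [show (16 : F) = 2 ^ 4 by norm_num]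
    exact pow_ne_zero 4 h2
  have ha : -2 * -(p₂ / 2) = p₂ := by field_simp
  have hb : (-(p₂ / 2)) ^ 2 - 4 * ((1 / 4) * (p₂ ^ 2 / 4 - p₁)) = p₁ := by
    field_simp
    ring
  have hY' : Y = y * (x ^ 2 - (1 / 4) * (p₂ ^ 2 / 4 - p₁)) / x ^ 2 := by
    rw [hY]
    field_simp
    ring
  rw [ha, hb] at hcurve
  rwa [hX, hY']
end

section
/- Let K be a field of characteristic zero and let λ₁, λ₂, λ₃ ∈ K with λ₁ ≠ 1 and λ₂ ≠ λ₃. Define A = 2(λ₁+1)/(λ₁−1), B = 2(λ₁λ₂ + λ₁λ₃ − 2λ₂λ₃ − 2λ₁ + λ₂ + λ₃)/((λ₂−λ₃)(λ₁−1)), C = 2(λ₃+λ₂)/(λ₃−λ₂), and D = 4(λ₁ − λ₂λ₃)/((λ₂−λ₃)(λ₁−1)). Then D² = A² + B² + C² + ABC − 4. -/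
theorem kummer_quartic_parameter_relation_general (K : Type*) [Field K]
    (lam₁ lam₂ lam₃ : K) (h₁ : lam₁ ≠ 1) (h₂₃ : lam₂ ≠ lam₃) (A B C D : K)
    (hA : A = 2 * (lam₁ + 1) / (lam₁ - 1))
    (hB : B = 2 * (lam₁ * lam₂ + lam₁ * lam₃ - 2 * lam₂ * lam₃ - 2 * lam₁ + lam₂ + lam₃) /
      ((lam₂ - lam₃) * (lam₁ - 1)))
    (hC : C = 2 * (lam₃ + lam₂) / (lam₃ - lam₂))
    (hD : D = 4 * (lam₁ - lam₂ * lam₃) / ((lam₂ - lam₃) * (lam₁ - 1))) :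
    D ^ 2 = A ^ 2 + B ^ 2 + C ^ 2 + A * B * C - 4 := by
  have h₁' : lam₁ - 1 ≠ 0 := sub_ne_zero.mpr h₁
  have h₂₃' : lam₂ - lam₃ ≠ 0 := sub_ne_zero.mpr h₂₃
  have h₃₂' : lam₃ - lam₂ ≠ 0 := sub_ne_zero.mpr h₂₃.symm
  subst hA hB hC hD
  field_simp
  ring

/-- The Kummer quartic parameters attached to the Rosenhain roots of a
genus-two curve satisfy D² = A² + B² + C² + ABC − 4. -/
theorem kummer_quartic_parameter_relation (K : Type*) [Field K] [CharZero K]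
    (lam₁ lam₂ lam₃ : K) (h₁ : lam₁ ≠ 1) (h₂₃ : lam₂ ≠ lam₃) (A B C D : K)
    (hA : A = 2 * (lam₁ + 1) / (lam₁ - 1))
    (hB : B = 2 * (lam₁ * lam₂ + lam₁ * lam₃ - 2 * lam₂ * lam₃ - 2 * lam₁ + lam₂ + lam₃) /
      ((lam₂ - lam₃) * (lam₁ - 1)))
    (hC : C = 2 * (lam₃ + lam₂) / (lam₃ - lam₂))
    (hD : D = 4 * (lam₁ - lam₂ * lam₃) / ((lam₂ - lam₃) * (lam₁ - 1))) :
    D ^ 2 = A ^ 2 + B ^ 2 + C ^ 2 + A * B * C - 4 :=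
  kummer_quartic_parameter_relation_general K lam₁ lam₂ lam₃ h₁ h₂₃ A B C D hA hB hC hD
end

section
/- Let K be a field of characteristic zero and let Λ₁, Λ₂, Λ₃ ∈ K with Λ₂ ≠ Λ₃, Λ₁ ≠ Λ₂, Λ₁ ≠ Λ₃, Λ₁ ≠ 2, and Λ₁ ≠ −2. Define Λ′₁ = 2(2Λ₁ − Λ₂ − Λ₃)/(Λ₂ − Λ₃), Λ′₂ = Λ′₁ − 4(Λ₁−Λ₂)(Λ₁−Λ₃)/((Λ₁+2)(Λ₂−Λ₃)), and Λ′₃ = Λ′₁ − 4(Λ₁−Λ₂)(Λ₁−Λ₃)/((Λ₁−2)(Λ₂−Λ₃)). Then Λ′₂ ≠ Λ′₃, Λ′₁ ≠ Λ′₂, Λ′₁ ≠ Λ′₃, Λ′₁ ≠ ±2, and the inverse relations hold: Λ₁ = 2(2Λ′₁ − Λ′₂ − Λ′₃)/(Λ′₂ − Λ′₃), Λ₂ − Λ₁ = −4(Λ′₁−Λ′₂)(Λ′₁−Λ′₃)/((Λ′₁+2)(Λ′₂−Λ′₃)), and Λ₃ − Λ₁ = −4(Λ′₁−Λ′₂)(Λ′₁−Λ′₃)/((Λ′₁−2)(Λ′₂−Λ′₃)).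 -/
/-!
In the differences `x = Λ₁ - Λ₂`, `y = Λ₁ - Λ₃` the transformation reads `Λ'₁ = 2 (x + y) / (y - x)`,
and the new differences are `x' = 4xy / ((Λ₁ + 2)(Λ₂ - Λ₃))`, `y' = 4xy / ((Λ₁ - 2)(Λ₂ - Λ₃))`.
They satisfy `(Λ₁ + 2) x' = (Λ₁ - 2) y'`, which is equivalent to `2 (x' + y') / (y' - x') = Λ₁`:
applying the transformation twice gives back `Λ₁`, and then `Λ₂`, `Λ₃` by clearing denominators.
So the transformation is an involution of the locus where all the denominators are nonzero.
-/

section Richelot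

variable {K : Type*} [Field K]

def richelot₁ (a b c : K) : K := 2 * (2 * a - b - c) / (b - c)

def richelot₂ (a b c : K) : K :=
  richelot₁ a b c - 4 * (a - b) * (a - c) / ((a + 2) * (b - c))

def richelot₃ (a b c : K) : K :=
  richelot₁ a b c - 4 * (a - b) * (a - c) / ((a - 2) * (b - c))

structure RichelotNondegenerate (a b c : K) : Prop where
  ne₂₃ : b ≠ c
  ne₁₂ : a ≠ b
  ne₁₃ : a ≠ c
  ne_two : a ≠ 2
  ne_neg_two : a ≠ -2

theorem RichelotNondegenerate.add_two_ne_zero {a b c : K} (h : RichelotNondegenerate a b c) :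
    a + 2 ≠ 0 :=
  mt eq_neg_iff_add_eq_zero.mpr h.ne_neg_two

theorem RichelotNondegenerate.sub_two_ne_zero {a b c : K} (h : RichelotNondegenerate a b c) :
    a - 2 ≠ 0 :=
  sub_ne_zero.mpr h.ne_two

theorem two_mul_add_div_sub_eq_of_mul_eq {a x y : K} (hxy : x ≠ y)
    (h : (a + 2) * x = (a - 2) * y) : 2 * (x + y) / (y - x) = a := by
  rw [div_eq_iff (sub_ne_zero.mpr hxy.symm)]
  linear_combination h

theorem richelot₁_eq_of_sub (a b c : K) :
    richelot₁ a b c = 2 * ((a - b) + (a - c)) / ((a - c) - (a - b)) := by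
  unfold richelot₁; congr 1 <;> ring

theorem richelot₁_sub_richelot₂ (a b c : K) :
    richelot₁ a b c - richelot₂ a b c = 4 * (a - b) * (a - c) / ((a + 2) * (b - c)) :=
  sub_sub_cancel _ _

theorem richelot₁_sub_richelot₃ (a b c : K) :
    richelot₁ a b c - richelot₃ a b c = 4 * (a - b) * (a - c) / ((a - 2) * (b - c)) :=
  sub_sub_cancel _ _

variable {a b c : K}

theorem richelot₂_sub_richelot₃ (hbc : b ≠ c) (ha : a - 2 ≠ 0) (ha' : a + 2 ≠ 0) :
    richelot₂ a b c - richelot₃ a b c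
      = 16 * (a - b) * (a - c) / ((a + 2) * (a - 2) * (b - c)) := by
  unfold richelot₂ richelot₃
  field_simp
  ring

theorem richelot₁_sub_two (hbc : b ≠ c) : richelot₁ a b c - 2 = 4 * (a - b) / (b - c) := by
  unfold richelot₁
  field_simp
  ring

theorem richelot₁_add_two (hbc : b ≠ c) : richelot₁ a b c + 2 = 4 * (a - c) / (b - c) := by
  unfold richelot₁
  field_simp
  ring

theorem add_two_mul_richelot₁_sub_richelot₂ (ha : a - 2 ≠ 0) (ha' : a + 2 ≠ 0) :
    (a + 2) * (richelot₁ a b c - richelot₂ a b c)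
      = (a - 2) * (richelot₁ a b c - richelot₃ a b c) := by
  rw [richelot₁_sub_richelot₂, richelot₁_sub_richelot₃]
  field_simp

variable [NeZero (2 : K)]

theorem four_ne_zero_of_two_ne_zero : (4 : K) ≠ 0 := by
  have := pow_ne_zero 2 (two_ne_zero' K)
  norm_num at this
  exact this

theorem sixteen_ne_zero_of_two_ne_zero : (16 : K) ≠ 0 := by
  have := pow_ne_zero 4 (two_ne_zero' K)
  norm_num at this
  exact this

theorem RichelotNondegenerate.richelot (h : RichelotNondegenerate a b c) :
    RichelotNondegenerate (richelot₁ a b c) (richelot₂ a b c) (richelot₃ a b c) := by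
  have := four_ne_zero_of_two_ne_zero (K := K)
  have := sixteen_ne_zero_of_two_ne_zero (K := K)
  have hbc := sub_ne_zero.mpr h.ne₂₃
  have := sub_ne_zero.mpr h.ne₁₂
  have := sub_ne_zero.mpr h.ne₁₃
  have := h.sub_two_ne_zero
  have := h.add_two_ne_zero
  refine ⟨sub_ne_zero.mp ?_, sub_ne_zero.mp ?_, sub_ne_zero.mp ?_, sub_ne_zero.mp ?_,
    mt eq_neg_iff_add_eq_zero.mp ?_⟩
  · rw [richelot₂_sub_richelot₃ h.ne₂₃ h.sub_two_ne_zero h.add_two_ne_zero]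
    exact div_ne_zero (by simp [*]) (by simp [*])
  · rw [richelot₁_sub_richelot₂]
    exact div_ne_zero (by simp [*]) (by simp [*])
  · rw [richelot₁_sub_richelot₃]
    exact div_ne_zero (by simp [*]) (by simp [*])
  · rw [richelot₁_sub_two h.ne₂₃]
    exact div_ne_zero (by simp [*]) hbc
  · rw [richelot₁_add_two h.ne₂₃]
    exact div_ne_zero (by simp [*]) hbc

theorem richelot₁_richelot (h : RichelotNondegenerate a b c) :
    richelot₁ (richelot₁ a b c) (richelot₂ a b c) (richelot₃ a b c) = a := by
  rw [richelot₁_eq_of_sub]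
  exact two_mul_add_div_sub_eq_of_mul_eq (fun e => h.richelot.ne₂₃ (sub_right_inj.mp e))
    (add_two_mul_richelot₁_sub_richelot₂ h.sub_two_ne_zero h.add_two_ne_zero)

theorem richelot₂_richelot (h : RichelotNondegenerate a b c) :
    richelot₂ (richelot₁ a b c) (richelot₂ a b c) (richelot₃ a b c) = b := by
  have := h.ne₂₃
  have := h.ne₁₂
  have := h.ne₁₃
  have := h.ne_two
  have := h.add_two_ne_zero
  have := four_ne_zero_of_two_ne_zero (K := K)
  have := sixteen_ne_zero_of_two_ne_zero (K := K)
  rw [richelot₂, richelot₁_richelot h, richelot₁_sub_richelot₂, richelot₁_sub_richelot₃,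
    richelot₂_sub_richelot₃ h.ne₂₃ h.sub_two_ne_zero h.add_two_ne_zero, richelot₁_add_two h.ne₂₃]
  field_simp
  ring

theorem richelot₃_richelot (h : RichelotNondegenerate a b c) :
    richelot₃ (richelot₁ a b c) (richelot₂ a b c) (richelot₃ a b c) = c := by
  have := h.ne₂₃
  have := h.ne₁₂
  have := h.ne₁₃
  have := h.ne_two
  have := h.add_two_ne_zero
  have := four_ne_zero_of_two_ne_zero (K := K)
  have := sixteen_ne_zero_of_two_ne_zero (K := K)
  rw [richelot₃, richelot₁_richelot h, richelot₁_sub_richelot₂, richelot₁_sub_richelot₃,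
    richelot₂_sub_richelot₃ h.ne₂₃ h.sub_two_ne_zero h.add_two_ne_zero, richelot₁_sub_two h.ne₂₃]
  field_simp
  ring

end Richelot

/-- The transformation of moduli under a (2,2)-isogeny (Richelot isogeny)
and its stated inverse are mutually inverse. -/
theorem richelot_moduli_inverse (K : Type*) [Field K] [CharZero K]
    (Λ₁ Λ₂ Λ₃ : K) (h₂₃ : Λ₂ ≠ Λ₃) (h₁₂ : Λ₁ ≠ Λ₂) (h₁₃ : Λ₁ ≠ Λ₃)
    (hp2 : Λ₁ ≠ 2) (hm2 : Λ₁ ≠ -2) (Λ'₁ Λ'₂ Λ'₃ : K)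
    (h'₁ : Λ'₁ = 2 * (2 * Λ₁ - Λ₂ - Λ₃) / (Λ₂ - Λ₃))
    (h'₂ : Λ'₂ = Λ'₁ - 4 * (Λ₁ - Λ₂) * (Λ₁ - Λ₃) / ((Λ₁ + 2) * (Λ₂ - Λ₃)))
    (h'₃ : Λ'₃ = Λ'₁ - 4 * (Λ₁ - Λ₂) * (Λ₁ - Λ₃) / ((Λ₁ - 2) * (Λ₂ - Λ₃))) :
    Λ'₂ ≠ Λ'₃ ∧ Λ'₁ ≠ Λ'₂ ∧ Λ'₁ ≠ Λ'₃ ∧ Λ'₁ ≠ 2 ∧ Λ'₁ ≠ -2 ∧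
      Λ₁ = 2 * (2 * Λ'₁ - Λ'₂ - Λ'₃) / (Λ'₂ - Λ'₃) ∧
      Λ₂ - Λ₁ = -(4 * (Λ'₁ - Λ'₂) * (Λ'₁ - Λ'₃)) / ((Λ'₁ + 2) * (Λ'₂ - Λ'₃)) ∧
      Λ₃ - Λ₁ = -(4 * (Λ'₁ - Λ'₂) * (Λ'₁ - Λ'₃)) / ((Λ'₁ - 2) * (Λ'₂ - Λ'₃)) := by
  have h : RichelotNondegenerate Λ₁ Λ₂ Λ₃ := ⟨h₂₃, h₁₂, h₁₃, hp2, hm2⟩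
  have e₁ : richelot₁ Λ₁ Λ₂ Λ₃ = Λ'₁ := h'₁.symm
  have e₂ : richelot₂ Λ₁ Λ₂ Λ₃ = Λ'₂ := by rw [h'₂, ← e₁]; rfl
  have e₃ : richelot₃ Λ₁ Λ₂ Λ₃ = Λ'₃ := by rw [h'₃, ← e₁]; rfl
  have h' := h.richelot
  have r₁ := richelot₁_richelot h
  have r₂ := richelot₂_richelot h
  have r₃ := richelot₃_richelot h
  simp only [e₁, e₂, e₃] at h' r₁ r₂ r₃
  exact ⟨h'.ne₂₃, h'.ne₁₂, h'.ne₁₃, h'.ne_two, h'.ne_neg_two, r₁.symm,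
    by linear_combination r₁ - r₂ - richelot₁_sub_richelot₂ Λ'₁ Λ'₂ Λ'₃,
    by linear_combination r₁ - r₃ - richelot₁_sub_richelot₃ Λ'₁ Λ'₂ Λ'₃⟩
end

section
/- Let K be a field, let Λ′₁, Λ′₂, Λ′₃ ∈ K, and let u, X, Y ∈ K with u ≠ 0. Suppose Y² = X³ + 2u²((2Λ′₁ − Λ′₂ − Λ′₃)(u + u⁻¹) + (2Λ′₂Λ′₃ − Λ′₁Λ′₂ − Λ′₁Λ′₃))X² + u⁴(Λ′₂ − Λ′₃)²((u + u⁻¹) − Λ′₁)²X. Define v = u + u⁻¹, x = (u²−1)²X/u⁴, y = (u²−1)³Y/u⁶. Then y² = x³ + 2(v²−4)((2Λ′₁ − Λ′₂ − Λ′₃)v + (2Λ′₂Λ′₃ − Λ′₁Λ′₂ − Λ′₁Λ′₃))x² + (v²−4)²(Λ′₂ − Λ′₃)²(v − Λ′₁)²x. -/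
/-! The map φ is a rescaling `(X, Y) ↦ (d²X, d³Y)` with `d = (u² − 1)/u²`, which turns a curve
`Y² = X³ + aX² + bX` into `y² = x³ + d²a x² + d⁴b x`. Since `v² − 4 = (u − u⁻¹)² = d²u²`, the
rescaled coefficients are exactly those of the target fibration. -/

theorem sq_eq_cubic_of_rescale {R : Type*} [CommRing R] {a b X Y : R} (d : R)
    (h : Y ^ 2 = X ^ 3 + a * X ^ 2 + b * X) :
    (d ^ 3 * Y) ^ 2 = (d ^ 2 * X) ^ 3 + d ^ 2 * a * (d ^ 2 * X) ^ 2 + (d ^ 2) ^ 2 * b * (d ^ 2 * X) := by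
  rw [mul_pow, h]
  ring

/-- The quotient map φ : (u,X,Y) ↦ (u + u⁻¹, (u²−1)²X/u⁴, (u²−1)³Y/u⁶)
sends solutions of the equation defining 𝒴 to solutions of the fibration on Kum(Jac 𝒞). -/
theorem kummer_rank17_quotient_phi (K : Type*) [Field K] (Λ'₁ Λ'₂ Λ'₃ u X Y : K) (hu : u ≠ 0)
    (h : Y ^ 2 = X ^ 3 + 2 * u ^ 2 * ((2 * Λ'₁ - Λ'₂ - Λ'₃) * (u + u⁻¹)
        + (2 * Λ'₂ * Λ'₃ - Λ'₁ * Λ'₂ - Λ'₁ * Λ'₃)) * X ^ 2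
      + u ^ 4 * (Λ'₂ - Λ'₃) ^ 2 * ((u + u⁻¹) - Λ'₁) ^ 2 * X)
    (v x y : K) (hv : v = u + u⁻¹)
    (hx : x = (u ^ 2 - 1) ^ 2 * X / u ^ 4) (hy : y = (u ^ 2 - 1) ^ 3 * Y / u ^ 6) :
    y ^ 2 = x ^ 3 + 2 * (v ^ 2 - 4) * ((2 * Λ'₁ - Λ'₂ - Λ'₃) * v
        + (2 * Λ'₂ * Λ'₃ - Λ'₁ * Λ'₂ - Λ'₁ * Λ'₃)) * x ^ 2
      + (v ^ 2 - 4) ^ 2 * (Λ'₂ - Λ'₃) ^ 2 * (v - Λ'₁) ^ 2 * x := by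
  set d := (u ^ 2 - 1) / u ^ 2
  have hx' : x = d ^ 2 * X := by rw [hx, div_pow]; ring
  have hy' : y = d ^ 3 * Y := by rw [hy, div_pow]; ring
  rw [hx', hy', hv, add_inv_sq_sub_four hu]
  linear_combination sq_eq_cubic_of_rescale d h
end

section
/- Let K be a field of characteristic different from 2, let λ₁, λ₂ ∈ K, and let u, x, y ∈ K with u ≠ 0. Write P(v) = (λ₁−1)(λ₂−1)v − 2(λ₁+1)(λ₂+1). Suppose y² = x³ − (1/2)u²·P(u + u⁻¹)·x² + (1/16)u⁴·(P(u + u⁻¹)² − 64λ₁λ₂)·x. Define v = u + u⁻¹, X = (u²−1)²x/u⁴, Y = (u²−1)³y/u⁶. Then Y² = X³ − (1/2)(v²−4)·P(v)·X² + (1/16)(v²−4)²·(P(v)² − 64λ₁λ₂)·X. -/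
/-!
The map φ′ is a rescaling `(x, y) ↦ (t²x, t³y)` with `t = (u² − 1)/u²`, which carries the curve
`y² = x³ + a x² + b x` to `y² = x³ + t²a x² + t⁴b x`. The source curve has `a, b` of weights
`u², u⁴`, and `t²u² = (u − u⁻¹)² = v² − 4`, which gives exactly the coefficients of the target.
-/

theorem cubic_curve_rescale {R : Type*} [CommRing R] {a b x y : R} (t : R)
    (h : y ^ 2 = x ^ 3 + a * x ^ 2 + b * x) :
    (t ^ 3 * y) ^ 2 = (t ^ 2 * x) ^ 3 + t ^ 2 * a * (t ^ 2 * x) ^ 2 + t ^ 4 * b * (t ^ 2 * x) := by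
  linear_combination t ^ 6 * h

theorem kummer_quotient_phi_prime_general (K : Type*) [Field K]
    (lam₁ lam₂ u x y : K) (hu : u ≠ 0) (P : K → K)
    (h : y ^ 2 = x ^ 3 - (1 / 2) * u ^ 2 * P (u + u⁻¹) * x ^ 2
      + (1 / 16) * u ^ 4 * (P (u + u⁻¹) ^ 2 - 64 * lam₁ * lam₂) * x)
    (v X Y : K) (hv : v = u + u⁻¹)
    (hX : X = (u ^ 2 - 1) ^ 2 * x / u ^ 4) (hY : Y = (u ^ 2 - 1) ^ 3 * y / u ^ 6) :
    Y ^ 2 = X ^ 3 - (1 / 2) * (v ^ 2 - 4) * P v * X ^ 2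
      + (1 / 16) * (v ^ 2 - 4) ^ 2 * (P v ^ 2 - 64 * lam₁ * lam₂) * X := by
  set t := (u ^ 2 - 1) / u ^ 2
  have hX' : X = t ^ 2 * x := by rw [hX, div_pow, ← pow_mul]; ring
  have hY' : Y = t ^ 3 * y := by rw [hY, div_pow, ← pow_mul]; ring
  have hv' : v ^ 2 - 4 = t ^ 2 * u ^ 2 := by rw [hv, add_inv_sq_sub_four hu]
  have hsource : y ^ 2 = x ^ 3 + -(1 / 2) * u ^ 2 * P v * x ^ 2
      + (1 / 16) * u ^ 4 * (P v ^ 2 - 64 * lam₁ * lam₂) * x := by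
    rw [hv]; linear_combination h
  have hXY := cubic_curve_rescale t hsource
  rw [hX', hY', hv']
  linear_combination hXY

/-- The quotient map φ′ : (u,x,y) ↦ (u + u⁻¹, (u²−1)²x/u⁴, (u²−1)³y/u⁶)
sends solutions of the 𝒥₆ fibration on Kum(ℰ′₁ × ℰ′₂) to solutions of the equation
defining 𝒴′_{lam₁,lam₂}. -/
theorem kummer_quotient_phi_prime (K : Type*) [Field K] (h2 : (2 : K) ≠ 0)
    (lam₁ lam₂ u x y : K) (hu : u ≠ 0) (P : K → K)
    (hP : ∀ v : K, P v = (lam₁ - 1) * (lam₂ - 1) * v - 2 * (lam₁ + 1) * (lam₂ + 1))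
    (h : y ^ 2 = x ^ 3 - (1 / 2) * u ^ 2 * P (u + u⁻¹) * x ^ 2
      + (1 / 16) * u ^ 4 * (P (u + u⁻¹) ^ 2 - 64 * lam₁ * lam₂) * x)
    (v X Y : K) (hv : v = u + u⁻¹)
    (hX : X = (u ^ 2 - 1) ^ 2 * x / u ^ 4) (hY : Y = (u ^ 2 - 1) ^ 3 * y / u ^ 6) :
    Y ^ 2 = X ^ 3 - (1 / 2) * (v ^ 2 - 4) * P v * X ^ 2
      + (1 / 16) * (v ^ 2 - 4) ^ 2 * (P v ^ 2 - 64 * lam₁ * lam₂) * X :=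
  kummer_quotient_phi_prime_general K lam₁ lam₂ u x y hu P h v X Y hv hX hY
end

section
/- Let p be an odd prime and let a, b, c ∈ ZMod p. Let N be the number of triples (x, w, y) ∈ (ZMod p)³ satisfying y² = −(x²−4)(x−w)(w−a)(w−b)(w−c). Then, as elements of ZMod p, N = 1 + (−1)^{(p−1)/2} · Σ_{ℓ=0}^{(p−1)/2} 2^ℓ · Σ_{s+t+ℓ = p−1, 0 ≤ s,t ≤ (p−1)/2} Σ_{i+j+k+ℓ = p−1, 0 ≤ i,j,k ≤ (p−1)/2} C((p−1)/2, s)·C((p−1)/2, t)·C((p−1)/2, ℓ)·C((p−1)/2, i)·C((p−1)/2, j)·C((p−1)/2, k)·(−1)^t·aⁱ·bʲ·cᵏ, where C(n, k) denotes the binomial coefficient. -/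
/-!
In a field with `q = 2m + 1` elements, Euler's criterion says that the number of square roots of
`v`, read in the field, is `1 + v ^ m`; hence `N = ∑_{x,w} f(x, w) ^ m` there. Expanding
`(x - w) ^ m` binomially separates the variables, and each one-variable sum is evaluated by
`∑_x x ^ n = -1` when `n` is a positive multiple of `q - 1` and `0` otherwise. The degrees are
small enough that only the exponent `q - 1` survives, except for the sum over `w`, whose top
exponent `2(q - 1)` contributes the constant `1`.
-/
open Finset

theorem sum_sum_mul_sub_pow_mul {R : Type*} [CommRing R] (s t : Finset R) (A B : R → R)
    (m : ℕ) :
    ∑ x ∈ s, ∑ w ∈ t, A x * (x - w) ^ m * B w =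
      ∑ l ∈ range (m + 1), (-1) ^ (l + m) * m.choose l *
        ((∑ x ∈ s, A x * x ^ l) * ∑ w ∈ t, w ^ (m - l) * B w) := by
  simp only [sub_pow, mul_sum, sum_mul]
  rw [sum_comm, sum_comm (s := range (m + 1))]
  refine sum_congr rfl fun w _ => ?_
  rw [sum_comm]
  exact sum_congr rfl fun l _ => sum_congr rfl fun x _ => by ring

namespace FiniteField

variable {K : Type*} [Field K] [Fintype K]

theorem sum_pow_eq_ite (n : ℕ) :
    ∑ x : K, x ^ n = if n ≠ 0 ∧ Fintype.card K - 1 ∣ n then -1 else 0 := by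
  classical
  rcases eq_or_ne n 0 with rfl | hn
  · simp
  have hzero : ∑ x : {x : K // ¬x ≠ 0}, (x : K) ^ n = 0 :=
    sum_eq_zero fun x _ => by rw [not_not.mp x.2, zero_pow hn]
  rw [← Fintype.sum_subtype_add_sum_subtype (fun x : K => x ≠ 0), hzero, add_zero,
    if_congr (and_iff_right hn) rfl rfl, ← sum_pow_units K n,
    ← (unitsEquivNeZero (G₀ := K)).sum_comp]
  rfl

theorem ne_zero_of_card_eq_two_mul_add_one {m : ℕ} (hq : Fintype.card K = 2 * m + 1) :
    m ≠ 0 := by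
  have := Fintype.one_lt_card (α := K)
  omega

theorem sum_pow_eq_of_card_eq {m n : ℕ} (hq : Fintype.card K = 2 * m + 1) (hn : n ≤ 4 * m) :
    ∑ x : K, x ^ n = -((if n = 2 * m then 1 else 0) + if n = 4 * m then 1 else 0) := by
  have hm := ne_zero_of_card_eq_two_mul_add_one hq
  have key : n ≠ 0 ∧ 2 * m ∣ n ↔ n = 2 * m ∨ n = 4 * m := by
    constructor
    · rintro ⟨hn0, e, rfl⟩
      have : e ≤ 2 := by nlinarith [Nat.pos_of_ne_zero hm]
      interval_cases e <;> omega
    · rintro (rfl | rfl)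
      exacts [⟨by omega, dvd_rfl⟩, ⟨by omega, 2, by ring⟩]
  rw [sum_pow_eq_ite, hq, Nat.add_sub_cancel, if_congr key rfl rfl]
  by_cases h1 : n = 2 * m
  · simp [h1, show 2 * m ≠ 4 * m by omega]
  by_cases h2 : n = 4 * m
  · simp [h2, hm]
  simp [h1, h2]

variable [DecidableEq K] (hK : ringChar K ≠ 2)
include hK

theorem cast_card_sq_eq (v : K) :
    (#{y : K | y ^ 2 = v} : K) = 1 + v ^ (Fintype.card K / 2) := by
  have h := congrArg (Int.cast : ℤ → K) (quadraticChar_card_sqrts hK v)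
  rw [Set.toFinset_ofPred] at h
  push_cast at h
  rw [h, quadraticChar_eq_pow_of_char_ne_two' hK, add_comm]

theorem cast_card_sq_eq_sum_sum (f : K → K → K) :
    (#{q : K × K × K | q.2.2 ^ 2 = f q.1 q.2.1} : K) =
      ∑ x : K, ∑ w : K, f x w ^ (Fintype.card K / 2) :=
  calc _ = ∑ x : K, ∑ w : K, (#{y : K | y ^ 2 = f x w} : K) := by
        simp only [natCast_card_filter, Fintype.sum_prod_type]
    _ = _ := by
        simp only [cast_card_sq_eq hK, sum_add_distrib, sum_const, card_univ, nsmul_one,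
          cast_card_eq_zero, zero_add]

end FiniteField

namespace TwistedLegendre

variable {R : Type*} [CommRing R]

variable (R) in
/-- `xCoeff R m l` and `wCoeff m l a b c` are the coefficients of `X ^ (2 * m - l)` in
`((1 + X) * (1 - X)) ^ m` and in `((1 + a * X) * (1 + b * X) * (1 + c * X)) ^ m`. -/
def xCoeff (m l : ℕ) : R :=
  ∑ s ∈ range (m + 1), ∑ t ∈ range (m + 1),
    if s + t + l = 2 * m then (m.choose s * m.choose t * (-1) ^ t : R) else 0

def wCoeff (m l : ℕ) (a b c : R) : R :=
  ∑ i ∈ range (m + 1), ∑ j ∈ range (m + 1), ∑ k ∈ range (m + 1),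
    if i + j + k + l = 2 * m then
      (m.choose i * m.choose j * m.choose k * a ^ i * b ^ j * c ^ k : R) else 0

theorem xCoeff_zero (m : ℕ) : xCoeff R m 0 = (-1) ^ m :=
  calc _ = ∑ s ∈ range (m + 1), ∑ t ∈ range (m + 1),
        (if s = m ∧ t = m then (m.choose s * m.choose t * (-1) ^ t : R) else 0) :=
        sum_congr rfl fun s hs => sum_congr rfl fun t ht =>
          if_congr (by rw [mem_range] at hs ht; omega) rfl rfl
    _ = (-1) ^ m := by simp [ite_and]

theorem choose_mul_xCoeff_mul_wCoeff (m l : ℕ) (a b c : R) :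
    m.choose l * (xCoeff R m l * wCoeff m l a b c) =
    ∑ s ∈ range (m + 1), ∑ t ∈ range (m + 1), ∑ i ∈ range (m + 1), ∑ j ∈ range (m + 1),
      ∑ k ∈ range (m + 1),
        if s + t + l = 2 * m ∧ i + j + k + l = 2 * m then
          (m.choose s * m.choose t * m.choose l * m.choose i * m.choose j * m.choose k *
            (-1) ^ t * a ^ i * b ^ j * c ^ k : R) else 0 := by
  simp only [xCoeff, wCoeff, sum_mul]
  simp only [mul_sum]
  refine sum_congr rfl fun s _ => sum_congr rfl fun t _ => sum_congr rfl fun i _ =>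
    sum_congr rfl fun j _ => sum_congr rfl fun k _ => ?_
  rw [ite_and]
  split_ifs <;> ring

variable {K : Type*} [Field K] [Fintype K] {m : ℕ} (hq : Fintype.card K = 2 * m + 1)
include hq

theorem sum_add_two_mul_sub_two_pow_mul_pow {l : ℕ} (hl : l ≤ m) :
    ∑ x : K, ((x + 2) * (x - 2)) ^ m * x ^ l = -((-1) ^ m * 2 ^ l * xCoeff K m l) := by
  have hm := FiniteField.ne_zero_of_card_eq_two_mul_add_one hq
  have expand : ∀ x : K, ((x + 2) * (x - 2)) ^ m * x ^ l = ∑ s ∈ range (m + 1),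
      ∑ t ∈ range (m + 1), m.choose s * m.choose t * (-1) ^ (t + m) * 2 ^ (m - s + (m - t)) *
        x ^ (s + t + l) := by
    intro x
    rw [mul_pow, add_pow, sub_pow, sum_mul_sum, sum_mul]
    exact sum_congr rfl fun s _ => by
      rw [sum_mul]; exact sum_congr rfl fun t _ => by ring
  simp only [expand, xCoeff, mul_sum, ← sum_neg_distrib]
  rw [sum_comm]
  refine sum_congr rfl fun s hs => ?_
  rw [sum_comm]
  refine sum_congr rfl fun t ht => ?_
  rw [mem_range] at hs ht
  rw [← mul_sum, FiniteField.sum_pow_eq_of_card_eq hq (by omega),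
    if_neg (show s + t + l ≠ 4 * m by omega)]
  split_ifs
  · rw [show m - s + (m - t) = l by omega, pow_add]
    ring
  · ring

theorem sum_pow_mul_sub_mul_sub_mul_sub_pow (a b c : K) {l : ℕ} (hl : l ≤ m) :
    ∑ w : K, w ^ (m - l) * ((w - a) * (w - b) * (w - c)) ^ m =
      -((-1) ^ l * wCoeff m l a b c + if l = 0 then 1 else 0) := by
  have expand : ∀ w : K, w ^ (m - l) * ((w - a) * (w - b) * (w - c)) ^ m =
      ∑ i ∈ range (m + 1), ∑ j ∈ range (m + 1), ∑ k ∈ range (m + 1),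
        m.choose i * m.choose j * m.choose k * (-a) ^ i * (-b) ^ j * (-c) ^ k *
          w ^ (m - l + (m - i) + (m - j) + (m - k)) := by
    intro w
    rw [mul_pow, mul_pow, show w - a = -a + w by ring, show w - b = -b + w by ring,
      show w - c = -c + w by ring, add_pow, add_pow, add_pow, sum_mul_sum]
    simp only [sum_mul]
    simp only [mul_sum]
    exact sum_congr rfl fun i _ => sum_congr rfl fun j _ => sum_congr rfl fun k _ => by ring
  have corner : (if l = 0 then 1 else 0 : K) = ∑ i ∈ range (m + 1), ∑ j ∈ range (m + 1),
      ∑ k ∈ range (m + 1), if l = 0 ∧ i = 0 ∧ j = 0 ∧ k = 0 then 1 else 0 := by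
    simp [ite_and]
  simp only [expand, corner, wCoeff, mul_sum, ← sum_add_distrib, ← sum_neg_distrib]
  rw [sum_comm]
  refine sum_congr rfl fun i hi => ?_
  rw [sum_comm]
  refine sum_congr rfl fun j hj => ?_
  rw [sum_comm]
  refine sum_congr rfl fun k hk => ?_
  rw [mem_range] at hi hj hk
  have hm := FiniteField.ne_zero_of_card_eq_two_mul_add_one hq
  rw [← mul_sum, FiniteField.sum_pow_eq_of_card_eq hq (by omega),
    if_congr (show m - l + (m - i) + (m - j) + (m - k) = 2 * m ↔ i + j + k + l = 2 * m by omega)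
      rfl rfl,
    if_congr (show m - l + (m - i) + (m - j) + (m - k) = 4 * m ↔ l = 0 ∧ i = 0 ∧ j = 0 ∧ k = 0 by
      omega) rfl rfl]
  split_ifs with hmid htop htop
  · omega
  · have hsign : (-1 : K) ^ (i + j + k) = (-1) ^ l := by
      rw [neg_one_pow_eq_pow_mod_two, show (i + j + k) % 2 = l % 2 by omega,
        ← neg_one_pow_eq_pow_mod_two]
    rw [neg_pow a, neg_pow b, neg_pow c, ← hsign, pow_add, pow_add]
    ring
  · obtain ⟨rfl, rfl, rfl, rfl⟩ := htop
    simp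
  · ring

theorem sum_sum_pow_eq (a b c : K) :
    ∑ x : K, ∑ w : K,
      ((x + 2) * (x - 2)) ^ m * (x - w) ^ m * ((w - a) * (w - b) * (w - c)) ^ m =
    (-1) ^ m + ∑ l ∈ range (m + 1), 2 ^ l * (m.choose l * (xCoeff K m l * wCoeff m l a b c)) := by
  have hε : ((-1 : K) ^ m) ^ 2 = 1 := by rw [← pow_mul, pow_mul', neg_one_sq, one_pow]
  have hterm : ∀ l ∈ range (m + 1), (-1) ^ (l + m) * (m.choose l : K) *
      ((∑ x : K, ((x + 2) * (x - 2)) ^ m * x ^ l) *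
        ∑ w : K, w ^ (m - l) * ((w - a) * (w - b) * (w - c)) ^ m) =
      2 ^ l * (m.choose l * (xCoeff K m l * wCoeff m l a b c)) +
        if l = 0 then (-1) ^ m else 0 := by
    intro l hl
    rw [mem_range, Nat.lt_succ_iff] at hl
    rw [sum_add_two_mul_sub_two_pow_mul_pow hq hl, sum_pow_mul_sub_mul_sub_mul_sub_pow hq a b c hl,
      pow_add]
    split_ifs with h0
    · subst h0
      rw [xCoeff_zero, Nat.choose_zero_right, Nat.cast_one]
      linear_combination ((-1) ^ m * (1 + wCoeff m 0 a b c)) * hε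
    · have hσ : ((-1 : K) ^ l) ^ 2 = 1 := by rw [← pow_mul, pow_mul', neg_one_sq, one_pow]
      linear_combination (2 ^ l * m.choose l * xCoeff K m l * wCoeff m l a b c) *
        (((-1) ^ l) ^ 2 * hε + hσ)
  rw [sum_sum_mul_sub_pow_mul, sum_congr rfl hterm, sum_add_distrib, sum_ite_eq',
    if_pos (mem_range.mpr m.succ_pos), add_comm]

end TwistedLegendre

/-- The rational point-count of the twisted Legendre pencil
y² = −(x²−4)(x−w)(w−a)(w−b)(w−c) over 𝔽_p, modulo p. -/
theorem twisted_legendre_point_count (p : ℕ) [Fact p.Prime] (hp : Odd p)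
    (a b c : ZMod p) (N : ℕ)
    (hN : N = (Finset.univ.filter (fun q : ZMod p × ZMod p × ZMod p =>
      q.2.2 ^ 2 = -(q.1 ^ 2 - 4) * (q.1 - q.2.1) * (q.2.1 - a) * (q.2.1 - b)
        * (q.2.1 - c))).card) :
    (N : ZMod p) = 1 + (-1 : ZMod p) ^ ((p - 1) / 2) *
      ∑ ℓ ∈ Finset.range ((p - 1) / 2 + 1), (2 : ZMod p) ^ ℓ *
        ∑ s ∈ Finset.range ((p - 1) / 2 + 1), ∑ t ∈ Finset.range ((p - 1) / 2 + 1),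
          ∑ i ∈ Finset.range ((p - 1) / 2 + 1), ∑ j ∈ Finset.range ((p - 1) / 2 + 1),
            ∑ k ∈ Finset.range ((p - 1) / 2 + 1),
              if s + t + ℓ = p - 1 ∧ i + j + k + ℓ = p - 1 then
                (((p - 1) / 2).choose s : ZMod p) * (((p - 1) / 2).choose t : ZMod p) *
                (((p - 1) / 2).choose ℓ : ZMod p) * (((p - 1) / 2).choose i : ZMod p) *
                (((p - 1) / 2).choose j : ZMod p) * (((p - 1) / 2).choose k : ZMod p) *
                (-1 : ZMod p) ^ t * a ^ i * b ^ j * c ^ k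
              else 0 := by
  obtain ⟨m, rfl⟩ := hp
  have hq : Fintype.card (ZMod (2 * m + 1)) = 2 * m + 1 := ZMod.card _
  have hK : ringChar (ZMod (2 * m + 1)) ≠ 2 := by
    rw [ZMod.ringChar_zmod_n]
    omega
  have hcount := FiniteField.cast_card_sq_eq_sum_sum hK
    fun x w => -(x ^ 2 - 4) * (x - w) * (w - a) * (w - b) * (w - c)
  rw [hq, show (2 * m + 1) / 2 = m by omega] at hcount
  rw [show 2 * m + 1 - 1 = 2 * m by omega, show 2 * m / 2 = m by omega]
  calc (N : ZMod (2 * m + 1))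
      = ∑ x, ∑ w, (-1) ^ m *
          (((x + 2) * (x - 2)) ^ m * (x - w) ^ m * ((w - a) * (w - b) * (w - c)) ^ m) := by
        rw [hN]
        refine hcount.trans (sum_congr rfl fun x _ => sum_congr rfl fun w _ => ?_)
        rw [← mul_pow, ← mul_pow, ← mul_pow]
        ring
    _ = (-1) ^ m * ((-1) ^ m + ∑ l ∈ range (m + 1), 2 ^ l *
          (m.choose l * (TwistedLegendre.xCoeff _ m l * TwistedLegendre.wCoeff m l a b c))) := by
        simp only [← mul_sum, TwistedLegendre.sum_sum_pow_eq hq]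
    _ = _ := by
        simp only [TwistedLegendre.choose_mul_xCoeff_mul_wCoeff]
        rw [mul_add, ← pow_add, Even.neg_one_pow ⟨m, rfl⟩]
end

section
/- Let p be an odd prime and let w ∈ ZMod p. Then, as elements of ZMod p, Σ_{x ∈ ZMod p} ((x+2)(x−2)(x−w))^{(p−1)/2} = − Σ_{ℓ=0}^{(p−1)/2} ( Σ_{s+t+ℓ = p−1, 0 ≤ s,t ≤ (p−1)/2} C((p−1)/2, s)·C((p−1)/2, t)·C((p−1)/2, ℓ)·2^ℓ·(−1)^s ) · w^{(p−1)/2−ℓ}, where C(n, k) denotes the binomial coefficient. -/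
/-!
Expanding the three binomial powers turns the sum into a combination of power sums
`∑ x, x ^ n` with `n ≤ 3m < 2(p - 1)`, where `m = (p - 1) / 2`. Over a finite field with `q`
elements such a power sum is `-1` for `n = q - 1` and `0` otherwise (for `n = 0` it is `q = 0`),
so only the terms with `s + t + ℓ = p - 1` survive, and on those the weights
`2 ^ (m - s) (-2) ^ (m - t) (-w) ^ (m - ℓ)` collapse to `2 ^ ℓ (-1) ^ s w ^ (m - ℓ)`.
-/

open Finset

namespace FiniteField

variable {K : Type*} [Field K] [Fintype K]

local notation "q" => Fintype.card K

theorem sum_pow_of_ne_zero {i : ℕ} (hi : i ≠ 0) :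
    ∑ x : K, x ^ i = if q - 1 ∣ i then -1 else 0 := by
  classical
  rw [← sum_pow_units K i, ← unitsEquivNeZero.symm.sum_comp]
  simp only [unitsEquivNeZero_symm_apply, Units.val_mk0]
  rw [← sum_subtype (univ.filter (· ≠ 0)) (by simp) (· ^ i), sum_filter_of_ne]
  rintro x - hx rfl
  exact hx (zero_pow hi)

theorem sum_pow_of_lt_two_mul {i : ℕ} (hi : i < 2 * (q - 1)) :
    ∑ x : K, x ^ i = if i = q - 1 then -1 else 0 := by
  rcases eq_or_ne i 0 with rfl | hi0
  · have : 0 < q - 1 := Nat.sub_pos_of_lt Fintype.one_lt_card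
    simp [this.ne]
  · rw [sum_pow_of_ne_zero hi0]
    congr 1
    refine propext ⟨fun ⟨k, hk⟩ => ?_, fun h => h ▸ dvd_rfl⟩
    rcases k with _ | _ | k <;> [omega; omega; nlinarith]

end FiniteField

theorem add_mul_add_mul_add_pow {R : Type*} [CommSemiring R] (x a b c : R) (m : ℕ) :
    ((x + a) * (x + b) * (x + c)) ^ m =
      ∑ ℓ ∈ range (m + 1), ∑ s ∈ range (m + 1), ∑ t ∈ range (m + 1),
        x ^ (s + t + ℓ) *
          (m.choose s * m.choose t * m.choose ℓ * a ^ (m - s) * b ^ (m - t) * c ^ (m - ℓ)) := by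
  simp only [mul_pow, add_pow, sum_mul, mul_sum]
  refine sum_congr rfl fun ℓ _ => sum_comm.trans <|
    sum_congr rfl fun s _ => sum_congr rfl fun t _ => ?_
  ring

theorem pow_mul_neg_pow_mul_neg_pow_of_add_eq_two_mul {R : Type*} [CommRing R] {m s t ℓ : ℕ}
    (h : s + t + ℓ = 2 * m) (hs : s ≤ m) (ht : t ≤ m) (hℓ : ℓ ≤ m) (a w : R) :
    a ^ (m - s) * (-a) ^ (m - t) * (-w) ^ (m - ℓ) = a ^ ℓ * (-1) ^ s * w ^ (m - ℓ) := by
  calc a ^ (m - s) * (-a) ^ (m - t) * (-w) ^ (m - ℓ)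
      = a ^ ((m - s) + (m - t)) * (-1) ^ ((m - t) + (m - ℓ)) * w ^ (m - ℓ) := by
        rw [neg_pow, neg_pow w]; ring
    _ = a ^ ℓ * (-1) ^ s * w ^ (m - ℓ) := by
        rw [show (m - s) + (m - t) = ℓ by omega, show (m - t) + (m - ℓ) = s by omega]

/-- Evaluation of the fiberwise character sum in the point-count of the
twisted Legendre pencil. -/
theorem fiberwise_character_sum (p : ℕ) [Fact p.Prime] (hp : Odd p) (w : ZMod p) :
    ∑ x : ZMod p, ((x + 2) * (x - 2) * (x - w)) ^ ((p - 1) / 2) =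
      -∑ ℓ ∈ Finset.range ((p - 1) / 2 + 1),
        (∑ s ∈ Finset.range ((p - 1) / 2 + 1), ∑ t ∈ Finset.range ((p - 1) / 2 + 1),
          if s + t + ℓ = p - 1 then
            (((p - 1) / 2).choose s : ZMod p) * (((p - 1) / 2).choose t : ZMod p) *
            (((p - 1) / 2).choose ℓ : ZMod p) * (2 : ZMod p) ^ ℓ * (-1 : ZMod p) ^ s
          else 0) * w ^ ((p - 1) / 2 - ℓ) := by
  obtain ⟨m, hm⟩ := hp
  have hm1 : 1 ≤ m := by have := (Fact.out : p.Prime).two_le; omega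
  have hcard : Fintype.card (ZMod p) - 1 = 2 * m := by rw [ZMod.card]; omega
  rw [show (p - 1) / 2 = m by omega, show p - 1 = 2 * m by omega]
  simp_rw [sub_eq_add_neg, add_mul_add_mul_add_pow]
  calc _ = ∑ ℓ ∈ range (m + 1), ∑ s ∈ range (m + 1), ∑ t ∈ range (m + 1),
        (∑ x : ZMod p, x ^ (s + t + ℓ)) * (m.choose s * m.choose t * m.choose ℓ *
          2 ^ (m - s) * (-2) ^ (m - t) * (-w) ^ (m - ℓ)) := by
        simp only [sum_mul]
        exact sum_comm.trans (sum_congr rfl fun _ _ => sum_comm.trans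
          (sum_congr rfl fun _ _ => sum_comm))
    _ = _ := by
      rw [← sum_neg_distrib]
      refine sum_congr rfl fun ℓ hℓ => ?_
      rw [sum_mul, ← sum_neg_distrib]
      refine sum_congr rfl fun s hs => ?_
      rw [sum_mul, ← sum_neg_distrib]
      refine sum_congr rfl fun t ht => ?_
      rw [mem_range] at hℓ hs ht
      rw [FiniteField.sum_pow_of_lt_two_mul (by omega), hcard]
      split_ifs with h
      · linear_combination (-(m.choose s * m.choose t * m.choose ℓ : ZMod p)) *
          pow_mul_neg_pow_mul_neg_pow_of_add_eq_two_mul h (by omega) (by omega) (by omega) 2 w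
      · simp
end
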